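/- arXiv:1504.07440 — 2 statements merged into one kernel-verified Lean document; each statement's English description precedes it below -/
import Mathlib

section
/- For a positive integer r and an integer η' with 1 ≤ η' ≤ r, the formal power series identity ∑_{σ=0}^∞ ((rσ+η')^σ / σ!) x^{rσ+η'} = z^{η'}/(1 - r z^r) holds, where x = z·e^{-z^r} (i.e., the left side, viewed as a power series in z after substituting x = z e^{-z^r}, equals the right side). -/
/-!
Write `expand r` for the substitution `w ↦ z^r`. Since `x = z · expand r (exp(-w))`,
`x^(rσ+η') = z^η' · expand r (w^σ · exp(-(rσ+η') w))`, while
`z^η' / (1 - r z^r) = z^η' · expand r (1 / (1 - r w))`. Comparing coefficients of `z^(η' + r k)`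
reduces the identity to `∑_{σ ≤ k} (rσ+η')^σ/σ! · (-(rσ+η'))^(k-σ)/(k-σ)! = r^k`. Multiplied by
`k!`, the left side is `∑_σ (-1)^(k-σ) C(k,σ) (rσ+η')^k`, the `k`-th forward difference at `0` of
the polynomial `(r x + η')^k` of degree `k` and leading coefficient `r^k`, which is `k! r^k`.
-/

open PowerSeries

/-- The formal power series `exp(-z^r) = ∑_{k≥0} (-1)^k z^{rk}/k!`. -/
noncomputable def expNegZr (r : ℕ) : PowerSeries ℚ :=
  PowerSeries.mk fun n => if r ∣ n then (-1 : ℚ)^(n/r) / (n/r).factorial else 0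

open Finset
open scoped fwdDiff

theorem sum_alternating_choose_mul_linear_pow {R : Type*} [CommRing R] (a c : R) (k : ℕ) :
    ∑ σ ∈ range (k + 1), (-1) ^ (k - σ) * k.choose σ * (a * σ + c) ^ k = k.factorial * a ^ k := by
  have hpoly : (fun x : R ↦ (a * x + c) ^ k) = a ^ k • (fun x : R ↦ x ^ k) +
      fun x ↦ ∑ i ∈ range k, (k.choose i * a ^ i * c ^ (k - i)) * x ^ i := by
    funext x
    simp only [add_pow, sum_range_succ, Nat.choose_self, Nat.sub_self, Pi.add_apply,
      Pi.smul_apply, smul_eq_mul]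
    ring_nf
  calc ∑ σ ∈ range (k + 1), (-1) ^ (k - σ) * k.choose σ * (a * σ + c) ^ k
      = (Δ_[1])^[k] (fun x : R ↦ (a * x + c) ^ k) 0 := by
        simp [fwdDiff_iter_eq_sum_shift]
    _ = k.factorial * a ^ k := by
        rw [hpoly, fwdDiff_iter_add, fwdDiff_iter_const_smul, fwdDiff_iter_eq_factorial,
          fwdDiff_iter_sum_mul_pow_eq_zero]
        simp [mul_comm]

namespace PowerSeries

theorem constantCoeff_rescale {R : Type*} [CommRing R] (a : R) (f : R⟦X⟧) :
    constantCoeff (rescale a f) = constantCoeff f := by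
  rw [← coeff_zero_eq_constantCoeff_apply, coeff_rescale, pow_zero, one_mul,
    coeff_zero_eq_constantCoeff_apply]

theorem coeff_X_pow_mul_expand {R : Type*} [CommRing R] {r : ℕ} (hr : r ≠ 0) (f : R⟦X⟧)
    (e n : ℕ) :
    coeff n (X ^ e * expand r hr f) = if e ≤ n ∧ r ∣ n - e then coeff ((n - e) / r) f else 0 := by
  rw [coeff_X_pow_mul', coeff_expand]
  split_ifs <;> tauto

variable {K : Type*} [Field K]

theorem map_inv_of_constantCoeff {F : Type*} [FunLike F K⟦X⟧ K⟦X⟧] [RingHomClass F K⟦X⟧ K⟦X⟧]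
    (φ : F) (hφ : ∀ f, constantCoeff (φ f) = constantCoeff f) (f : K⟦X⟧) :
    φ f⁻¹ = (φ f)⁻¹ := by
  by_cases hf : constantCoeff f = 0
  · rw [PowerSeries.inv_eq_zero.mpr hf, PowerSeries.inv_eq_zero.mpr (by rwa [hφ]), map_zero]
  · rw [eq_inv_iff_mul_eq_one (by rwa [hφ]), ← map_mul, PowerSeries.inv_mul_cancel _ hf, map_one]

theorem coeff_inv_one_sub_C_mul_X (a : K) (n : ℕ) : coeff n (1 - C a * X)⁻¹ = a ^ n := by
  have hgeom : ((1 : K⟦X⟧) - X)⁻¹ = mk 1 :=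
    ((eq_inv_iff_mul_eq_one (by simp)).mpr (mk_one_mul_one_sub_eq_one K)).symm
  have hrescale : (1 : K⟦X⟧) - C a * X = rescale a (1 - X) := by simp
  rw [hrescale, ← map_inv_of_constantCoeff _ (constantCoeff_rescale a), hgeom, coeff_rescale]
  simp

variable [CharZero K]

theorem coeff_X_pow_mul_rescale_exp (b : K) (σ k : ℕ) :
    coeff k (X ^ σ * rescale b (exp K)) =
      if σ ≤ k then b ^ (k - σ) / (k - σ).factorial else 0 := by
  simp [coeff_X_pow_mul', coeff_rescale, coeff_exp, div_eq_mul_inv]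

theorem sum_coeff_X_pow_mul_rescale_exp (a c : K) {k M : ℕ} (hk : k < M) :
    ∑ σ ∈ range M, (a * σ + c) ^ σ / σ.factorial *
      coeff k (X ^ σ * rescale (-(a * σ + c)) (exp K)) = a ^ k := by
  have hk_fact : (k.factorial : K) ≠ 0 := Nat.cast_ne_zero.mpr k.factorial_ne_zero
  have hterm : ∀ σ ∈ range (k + 1), (a * σ + c) ^ σ / σ.factorial *
      coeff k (X ^ σ * rescale (-(a * σ + c)) (exp K)) =
      (-1) ^ (k - σ) * k.choose σ * (a * σ + c) ^ k / k.factorial := by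
    intro σ hσ
    have hσk : σ ≤ k := Nat.lt_succ_iff.mp (mem_range.mp hσ)
    rw [coeff_X_pow_mul_rescale_exp, if_pos hσk, Nat.cast_choose K hσk, neg_pow,
      ← pow_mul_pow_sub _ hσk]
    field_simp
  rw [← sum_subset (range_subset_range.mpr hk), sum_congr rfl hterm, ← sum_div,
    sum_alternating_choose_mul_linear_pow, mul_div_cancel_left₀ _ hk_fact]
  intro σ _ hσ
  rw [coeff_X_pow_mul_rescale_exp, if_neg (by simpa using hσ), mul_zero]

end PowerSeries

theorem expNegZr_eq_expand {r : ℕ} (hr : r ≠ 0) :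
    expNegZr r = expand r hr (rescale (-1) (exp ℚ)) := by
  ext n
  rw [expNegZr, coeff_mk, coeff_expand]
  split_ifs <;> simp [coeff_rescale, coeff_exp, div_eq_mul_inv]

theorem X_mul_expNegZr_pow {r : ℕ} (hr : r ≠ 0) (σ e : ℕ) :
    (X * expNegZr r) ^ (r * σ + e) =
      X ^ e * expand r hr (X ^ σ * rescale (-((r * σ + e : ℕ) : ℚ)) (exp ℚ)) := by
  rw [mul_pow, expNegZr_eq_expand hr, ← map_pow, ← map_pow, exp_pow_eq_rescale_exp,
    rescale_rescale, map_mul, map_pow, expand_X, ← pow_mul, pow_add]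
  ring_nf

theorem stmt_3_general (r η' : ℕ) (hr : 1 ≤ r) (N : ℕ) :
    PowerSeries.coeff (R := ℚ) N ((X : PowerSeries ℚ)^η' * (1 - C (R := ℚ) (r : ℚ) * X^r)⁻¹) =
      ∑ σ ∈ Finset.range (N+1),
        (((r*σ+η' : ℕ) : ℚ)^σ / (σ.factorial : ℚ)) *
          PowerSeries.coeff (R := ℚ) N (((X : PowerSeries ℚ) * expNegZr r)^(r*σ+η')) := by
  have hr0 : r ≠ 0 := Nat.one_le_iff_ne_zero.mp hr
  have hgeom : (1 : ℚ⟦X⟧) - C (r : ℚ) * X ^ r = expand r hr0 (1 - C (r : ℚ) * X) := by simp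
  rw [hgeom, ← map_inv_of_constantCoeff _ (constantCoeff_expand r hr0)]
  simp only [X_mul_expNegZr_pow hr0, coeff_X_pow_mul_expand, mul_ite, mul_zero,
    sum_ite_irrel, sum_const_zero]
  split_ifs
  · rw [coeff_inv_one_sub_C_mul_X]
    push_cast
    exact (sum_coeff_X_pow_mul_rescale_exp (r : ℚ) η'
      (Nat.lt_succ_of_le ((Nat.div_le_self _ _).trans (Nat.sub_le _ _)))).symm
  · rfl

/-- For `1 ≤ η' ≤ r`, substituting `x = z·e^{-z^r}` gives the formal power series
identity `∑_{σ≥0} ((rσ+η')^σ/σ!) x^{rσ+η'} = z^{η'}/(1 - r z^r)`, stated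
coefficientwise (the sum over `σ` is finite in each coefficient, since the term
for `σ` has order `> N` once `rσ + η' > N`). -/
theorem stmt_3 (r η' : ℕ) (hr : 1 ≤ r) (h1 : 1 ≤ η') (h2 : η' ≤ r) (N : ℕ) :
    PowerSeries.coeff (R := ℚ) N ((X : PowerSeries ℚ)^η' * (1 - C (R := ℚ) (r : ℚ) * X^r)⁻¹) =
      ∑ σ ∈ Finset.range (N+1),
        (((r*σ+η' : ℕ) : ℚ)^σ / (σ.factorial : ℚ)) *
          PowerSeries.coeff (R := ℚ) N (((X : PowerSeries ℚ) * expNegZr r)^(r*σ+η')) :=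
  stmt_3_general r η' hr N
end

section
/- The formal power series F(z₁,z₂,u) = S(ruz₂)^{z₂/r} · S(ruz₁)^{z₁/r} / (ζ(uz₂)·ζ(uz₁)) has u-expansion 1/(u²z₁z₂) + (1/(24 z₁z₂))(r z₁³ + r z₂³ - z₁² - z₂²) + O(u²); in particular, the coefficient of u⁰ contains no monomials with positive degree in both z₁ and z₂. -/
open Filter Topology Asymptotics

/-!
For small `u ≠ 0` all the values of `S` involved are close to `1`, so principal logarithms give
`F(u) = exp (g u) / (u² z₁ z₂)` with
`g = (z₂/r) log S(ruz₂) + (z₁/r) log S(ruz₁) - log S(uz₁) - log S(uz₂)`.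
From `ζ(w) = w + w³/24 + O(w⁵)` we get `log S(w) = w²/24 + O(w⁴)`, hence `g(u) = c u² + O(u⁴)`
with `c = (rz₁³ + rz₂³ - z₁² - z₂²)/24`, and `exp (g u) = 1 + c u² + O(u⁴)`. Dividing by
`u² z₁ z₂` gives the expansion, and `c/(z₁z₂) = (rz₁² - z₁)/(24z₂) + (rz₂² - z₂)/(24z₁)`.
-/

section PowerAsymptotics

variable {𝕜 : Type*} [NormedField 𝕜]

lemma tendsto_const_mul_nhdsNE_zero {a : 𝕜} (ha : a ≠ 0) :
    Tendsto (a * ·) (𝓝[≠] 0) (𝓝[≠] 0) :=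
  tendsto_nhdsWithin_of_tendsto_nhds_of_eventually_within _
    (((continuous_const_mul a).tendsto' 0 0 (mul_zero a)).mono_left nhdsWithin_le_nhds)
    (eventually_mem_nhdsWithin.mono fun _ hu => mul_ne_zero ha hu)

lemma Asymptotics.IsBigO.comp_const_mul {E : Type*} [Norm E] {f : 𝕜 → E} {n : ℕ} {a : 𝕜}
    (hf : f =O[𝓝[≠] 0] (· ^ n)) (ha : a ≠ 0) :
    (fun u => f (a * u)) =O[𝓝[≠] 0] (· ^ n) :=
  (hf.comp_tendsto (tendsto_const_mul_nhdsNE_zero ha)).trans <|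
    (isBigO_const_mul_self (a ^ n) _ _).congr_left fun u => (mul_pow a u n).symm

lemma isBigO_pow_pow_nhdsNE_zero {m n : ℕ} (h : m < n) :
    (fun u : 𝕜 => u ^ n) =O[𝓝[≠] 0] (· ^ m) :=
  (isLittleO_pow_pow h).isBigO.mono nhdsWithin_le_nhds

lemma Asymptotics.IsBigO.tendsto_zero_of_pow {E : Type*} [NormedAddCommGroup E]
    {f : 𝕜 → E} {n : ℕ} (hf : f =O[𝓝[≠] 0] (· ^ n)) (hn : n ≠ 0) :
    Tendsto f (𝓝[≠] 0) (𝓝 0) :=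
  hf.trans_tendsto <| ((continuous_pow n).tendsto' 0 0 (zero_pow hn)).mono_left nhdsWithin_le_nhds

end PowerAsymptotics

namespace ZetaExpansion

noncomputable def zeta (w : ℂ) : ℂ := Complex.exp (w / 2) - Complex.exp (-w / 2)

noncomputable def S (w : ℂ) : ℂ := zeta w / w

lemma zeta_sub_isBigO : (fun w => zeta w - (w + w ^ 3 / 24)) =O[𝓝[≠] 0] (· ^ 5) := by
  have hexp := (Complex.exp_sub_sum_range_isBigO_pow 5).mono (nhdsWithin_le_nhds (s := {0}ᶜ))
  refine ((hexp.comp_const_mul (a := 1 / 2) (by norm_num)).sub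
    (hexp.comp_const_mul (a := -1 / 2) (by norm_num))).congr_left fun w => ?_
  simp only [zeta, Finset.sum_range_succ, Finset.sum_range_zero, Nat.factorial]
  ring_nf

lemma S_sub_isBigO : (fun w => S w - (1 + w ^ 2 / 24)) =O[𝓝[≠] 0] (· ^ 4) := by
  refine (zeta_sub_isBigO.mul (isBigO_refl (·⁻¹) _)).congr' ?_ ?_ <;>
    filter_upwards [self_mem_nhdsWithin] with w (hw : w ≠ 0)
  · simp only [S]; field_simp
  · field_simp

lemma S_sub_one_isBigO : (fun w => S w - 1) =O[𝓝[≠] 0] (· ^ 2) :=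
  ((S_sub_isBigO.trans (isBigO_pow_pow_nhdsNE_zero (by norm_num))).add
    (isBigO_const_mul_self (1 / 24 : ℂ) _ _)).congr_left fun w => by ring

lemma tendsto_S_sub_one : Tendsto (fun w => S w - 1) (𝓝[≠] 0) (𝓝 0) :=
  S_sub_one_isBigO.tendsto_zero_of_pow two_ne_zero

lemma eventually_S_const_mul_ne_zero {a : ℂ} (ha : a ≠ 0) :
    ∀ᶠ u in 𝓝[≠] 0, S (a * u) ≠ 0 := by
  have h := (tendsto_S_sub_one.comp (tendsto_const_mul_nhdsNE_zero ha)).eventually_ne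
    (by norm_num : (0 : ℂ) ≠ -1)
  filter_upwards [h] with u hu h0
  simp [Function.comp, h0] at hu

lemma log_S_sub_isBigO :
    (fun w => Complex.log (S w) - w ^ 2 / 24) =O[𝓝[≠] 0] (· ^ 4) := by
  have hsq : (fun w => (S w - 1) ^ 2) =O[𝓝[≠] 0] (· ^ 4) :=
    (S_sub_one_isBigO.pow 2).congr_right fun w => by ring
  have hlog := (Complex.log_sub_self_isBigO.comp_tendsto tendsto_S_sub_one).trans hsq
  refine (hlog.add S_sub_isBigO).congr_left fun w => ?_
  simp only [Function.comp, add_sub_cancel]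
  ring

lemma exp_sub_one_add_isBigO {g : ℂ → ℂ} {c : ℂ}
    (hg : (fun u => g u - c * u ^ 2) =O[𝓝[≠] 0] (· ^ 4)) :
    (fun u => Complex.exp (g u) - (1 + c * u ^ 2)) =O[𝓝[≠] 0] (· ^ 4) := by
  have hg₂ : g =O[𝓝[≠] 0] (· ^ 2) :=
    ((hg.trans (isBigO_pow_pow_nhdsNE_zero (by norm_num))).add
      (isBigO_const_mul_self c _ _)).congr_left fun u => by ring
  have hsq : (fun u => g u ^ 2) =O[𝓝[≠] 0] (· ^ 4) :=
    (hg₂.pow 2).congr_right fun u => by ring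
  have hexp := ((Complex.exp_sub_sum_range_isBigO_pow 2).comp_tendsto
    (hg₂.tendsto_zero_of_pow two_ne_zero)).trans hsq
  refine (hexp.add hg).congr_left fun u => ?_
  simp only [Function.comp_apply, Finset.sum_range_succ, Finset.sum_range_zero, Nat.factorial]
  ring

lemma zeta_eq_mul_S {w : ℂ} (hw : w ≠ 0) : zeta w = w * S w := by
  rw [S, mul_div_cancel₀ _ hw]

noncomputable def F (r : ℕ) (z₁ z₂ u : ℂ) : ℂ :=
  S ((r : ℂ) * u * z₂) ^ (z₂ / (r : ℂ)) * S ((r : ℂ) * u * z₁) ^ (z₁ / (r : ℂ))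
    / (zeta (u * z₂) * zeta (u * z₁))

noncomputable def logF (r : ℕ) (z₁ z₂ u : ℂ) : ℂ :=
  Complex.log (S ((r : ℂ) * u * z₂)) * (z₂ / r) + Complex.log (S ((r : ℂ) * u * z₁)) * (z₁ / r)
    - Complex.log (S (u * z₁)) - Complex.log (S (u * z₂))

variable {r : ℕ} {z₁ z₂ : ℂ}

lemma F_eventuallyEq (hr : r ≠ 0) (h₁ : z₁ ≠ 0) (h₂ : z₂ ≠ 0) :
    F r z₁ z₂ =ᶠ[𝓝[≠] 0] fun u => Complex.exp (logF r z₁ z₂ u) / (u ^ 2 * z₁ * z₂) := by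
  have hr' : (r : ℂ) ≠ 0 := Nat.cast_ne_zero.2 hr
  filter_upwards [self_mem_nhdsWithin,
    eventually_S_const_mul_ne_zero (mul_ne_zero hr' h₂),
    eventually_S_const_mul_ne_zero (mul_ne_zero hr' h₁),
    eventually_S_const_mul_ne_zero h₁, eventually_S_const_mul_ne_zero h₂]
    with u (hu : u ≠ 0) hS₁ hS₂ hS₃ hS₄
  rw [mul_right_comm] at hS₁ hS₂
  rw [mul_comm] at hS₃ hS₄
  rw [F, logF, Complex.exp_sub, Complex.exp_sub, Complex.exp_add, Complex.exp_log hS₃,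
    Complex.exp_log hS₄, ← Complex.cpow_def_of_ne_zero hS₁, ← Complex.cpow_def_of_ne_zero hS₂,
    zeta_eq_mul_S (mul_ne_zero hu h₁), zeta_eq_mul_S (mul_ne_zero hu h₂)]
  field_simp

lemma logF_sub_isBigO (hr : r ≠ 0) (h₁ : z₁ ≠ 0) (h₂ : z₂ ≠ 0) :
    (fun u => logF r z₁ z₂ u - ((r : ℂ) * z₁ ^ 3 + r * z₂ ^ 3 - z₁ ^ 2 - z₂ ^ 2) / 24 * u ^ 2)
      =O[𝓝[≠] 0] (· ^ 4) := by
  have hr' : (r : ℂ) ≠ 0 := Nat.cast_ne_zero.2 hr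
  have hL {a : ℂ} (ha : a ≠ 0) :
      (fun u => Complex.log (S (a * u)) - a ^ 2 / 24 * u ^ 2) =O[𝓝[≠] 0] (· ^ 4) :=
    (log_S_sub_isBigO.comp_const_mul ha).congr_left fun u => by ring
  refine ((((hL (mul_ne_zero hr' h₂)).const_mul_left (z₂ / r)).add
    ((hL (mul_ne_zero hr' h₁)).const_mul_left (z₁ / r))).sub (hL h₁)).sub (hL h₂)
    |>.congr_left fun u => ?_
  rw [logF, mul_right_comm (r : ℂ) u z₂, mul_right_comm (r : ℂ) u z₁, mul_comm u z₁,
    mul_comm u z₂]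
  field_simp
  ring

end ZetaExpansion

/-- The function `F(z₁,z₂,u) = S(ruz₂)^{z₂/r}·S(ruz₁)^{z₁/r}/(ζ(uz₂)ζ(uz₁))` has
`u`-expansion `1/(u²z₁z₂) + (1/(24z₁z₂))(rz₁³ + rz₂³ - z₁² - z₂²) + O(u²)`; in
particular, the `u⁰`-coefficient contains no monomials with positive degree in
both `z₁` and `z₂` (it is of the form `p(z₁)/z₂ + q(z₂)/z₁`). -/
theorem stmt_12 (r : ℕ) (hr : 1 ≤ r) (z₁ z₂ : ℂ) (h₁ : z₁ ≠ 0) (h₂ : z₂ ≠ 0) :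
    let zeta : ℂ → ℂ := fun w => Complex.exp (w/2) - Complex.exp (-w/2)
    let S : ℂ → ℂ := fun w => zeta w / w
    let F : ℂ → ℂ := fun u =>
      S ((r : ℂ)*u*z₂) ^ (z₂/(r : ℂ)) * S ((r : ℂ)*u*z₁) ^ (z₁/(r : ℂ))
        / (zeta (u*z₂) * zeta (u*z₁))
    ((fun u : ℂ => F u - (1/(u^2*z₁*z₂)
          + ((r : ℂ)*z₁^3 + (r : ℂ)*z₂^3 - z₁^2 - z₂^2)/(24*z₁*z₂)))
        =O[𝓝[≠] (0 : ℂ)] fun u => u^2)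
    ∧ ∃ p q : Polynomial ℂ,
        ((r : ℂ)*z₁^3 + (r : ℂ)*z₂^3 - z₁^2 - z₂^2)/(24*z₁*z₂)
          = Polynomial.eval z₁ p / z₂ + Polynomial.eval z₂ q / z₁ := by
  intro zeta S F
  have hr₀ : r ≠ 0 := by omega
  refine ⟨?_, ?_⟩
  · set c : ℂ := ((r : ℂ) * z₁ ^ 3 + r * z₂ ^ 3 - z₁ ^ 2 - z₂ ^ 2) / 24
    have hE := ZetaExpansion.exp_sub_one_add_isBigO (ZetaExpansion.logF_sub_isBigO hr₀ h₁ h₂)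
    have hdiv : (fun u => (Complex.exp (ZetaExpansion.logF r z₁ z₂ u) - (1 + c * u ^ 2))
        / (u ^ 2 * z₁ * z₂)) =O[𝓝[≠] 0] (· ^ 2) := by
      refine ((hE.mul (isBigO_refl (fun u => (u ^ 2 * z₁ * z₂)⁻¹) _)).trans
        ((isBigO_const_mul_self (z₁ * z₂)⁻¹ (· ^ 2) _).congr' ?_ .rfl)).congr_left
        fun u => (div_eq_mul_inv _ _).symm
      filter_upwards [self_mem_nhdsWithin] with u (hu : u ≠ 0)
      field_simp
    refine hdiv.congr' ?_ .rfl
    filter_upwards [ZetaExpansion.F_eventuallyEq hr₀ h₁ h₂, self_mem_nhdsWithin]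
      with u hF (hu : u ≠ 0)
    change _ = ZetaExpansion.F r z₁ z₂ u - _
    rw [hF]
    field_simp
    ring
  · let p : Polynomial ℂ := .C ((r : ℂ) / 24) * .X ^ 2 - .C (1 / 24) * .X
    refine ⟨p, p, ?_⟩
    simp only [p, Polynomial.eval_sub, Polynomial.eval_mul, Polynomial.eval_pow,
      Polynomial.eval_C, Polynomial.eval_X]
    field_simp
    ring
end
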